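/- For a matrix W of rank r with singular value decomposition W = U D V' where D = diag(d_1,...,d_r), the unique minimizer of (1/2)‖Z − W‖_F² + λ‖Z‖_* over all matrices Z is given by the soft-thresholded SVD S_λ(W) = U D_λ V', where D_λ = diag((d_1−λ)_+, ..., (d_r−λ)_+). -/

import Mathlib

open Matrix BigOperators Finset

noncomputable section

/-- Squared Frobenius norm of a real matrix. -/
def frobSq {m n : ℕ} (A : Matrix (Fin m) (Fin n) ℝ) : ℝ :=
  ∑ i, ∑ j, (A i j) ^ 2

/-- Frobenius norm. -/
def frobNorm {m n : ℕ} (A : Matrix (Fin m) (Fin n) ℝ) : ℝ :=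
  Real.sqrt (frobSq A)

/-- The singular values of `A`, as square roots of the eigenvalues of `Aᴴ * A`. -/
def singVals {m n : ℕ} (A : Matrix (Fin m) (Fin n) ℝ) : Fin n → ℝ :=
  fun i => Real.sqrt ((show (Aᵀ * A).IsHermitian by
    simpa [Matrix.conjTranspose_eq_transpose_of_trivial] using
      Matrix.isHermitian_conjTranspose_mul_self A).eigenvalues i)

/-- Nuclear norm: the sum of the singular values. -/
def nnorm {m n : ℕ} (A : Matrix (Fin m) (Fin n) ℝ) : ℝ :=
  ∑ i, singVals A i

/-- Spectral norm: the largest singular value. -/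
def specNorm {m n : ℕ} (A : Matrix (Fin m) (Fin n) ℝ) : ℝ :=
  ⨆ i, singVals A i

/-- Projection onto the observed entries `Ω`. -/
def pO {m n : ℕ} (Ω : Finset (Fin m × Fin n)) (Y : Matrix (Fin m) (Fin n) ℝ) :
    Matrix (Fin m) (Fin n) ℝ :=
  fun i j => if (i, j) ∈ Ω then Y i j else 0

/-- Complementary projection `P_Ω^⊥ = I - P_Ω`. -/
def pOc {m n : ℕ} (Ω : Finset (Fin m × Fin n)) (Y : Matrix (Fin m) (Fin n) ℝ) :
    Matrix (Fin m) (Fin n) ℝ :=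
  Y - pO Ω Y

/-- The objective `f_λ(Z) = ½‖P_Ω(Z) - P_Ω(X)‖_F² + λ‖Z‖_*`. -/
def fObj {m n : ℕ} (Ω : Finset (Fin m × Fin n)) (X : Matrix (Fin m) (Fin n) ℝ) (lam : ℝ)
    (Z : Matrix (Fin m) (Fin n) ℝ) : ℝ :=
  (1 / 2) * frobSq (pO Ω Z - pO Ω X) + lam * nnorm Z

/-- The surrogate `Q_λ(Z | Z̃) = ½‖P_Ω(X) + P_Ω^⊥(Z̃) - Z‖_F² + λ‖Z‖_*`. -/
def qObj {m n : ℕ} (Ω : Finset (Fin m × Fin n)) (X : Matrix (Fin m) (Fin n) ℝ) (lam : ℝ)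
    (Z Zt : Matrix (Fin m) (Fin n) ℝ) : ℝ :=
  (1 / 2) * frobSq (pO Ω X + pOc Ω Zt - Z) + lam * nnorm Z

/-- `IsSVD W U d V` : `W = U D Vᵀ` is a thin SVD of `W` with strictly positive
singular values `d` and orthonormal columns in `U` and `V`. -/
def IsSVD {m n r : ℕ} (W : Matrix (Fin m) (Fin n) ℝ) (U : Matrix (Fin m) (Fin r) ℝ)
    (d : Fin r → ℝ) (V : Matrix (Fin n) (Fin r) ℝ) : Prop :=
  Uᵀ * U = 1 ∧ Vᵀ * V = 1 ∧ (∀ i, 0 < d i) ∧ W = U * Matrix.diagonal d * Vᵀ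

/-- Trace inner product `⟨A, B⟩ = tr(AᵀB)`. -/
def minner {m n : ℕ} (A B : Matrix (Fin m) (Fin n) ℝ) : ℝ :=
  ∑ i, ∑ j, A i j * B i j

/-- `G` is a subgradient of the nuclear norm at `Z`. -/
def NucSubgrad {m n : ℕ} (Z G : Matrix (Fin m) (Fin n) ℝ) : Prop :=
  ∀ Y, nnorm Z + minner G (Y - Z) ≤ nnorm Y

end

section Contraction

lemma sq_apply_le_gram_apply {ι κ : Type*} [Fintype ι] (B : Matrix ι κ ℝ) (i : ι) (j : κ) :
    B i j ^ 2 ≤ (Bᵀ * B) j j := by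
  simpa [mul_apply, sq] using
    Finset.single_le_sum (f := fun k => B k j * B k j) (fun k _ => mul_self_nonneg _)
      (Finset.mem_univ i)

variable {ι κ ν ρ : Type*} [Fintype ι] [Fintype κ] [Fintype ν] [Fintype ρ]

def IsContraction (G : Matrix ι κ ℝ) : Prop :=
  ∀ x : κ → ℝ, G *ᵥ x ⬝ᵥ G *ᵥ x ≤ x ⬝ᵥ x

lemma IsContraction.mul {G : Matrix ι κ ℝ} {H : Matrix κ ν ℝ} (hG : IsContraction G)
    (hH : IsContraction H) : IsContraction (G * H) := fun x => by
  rw [← mulVec_mulVec]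
  exact (hG _).trans (hH x)

lemma mulVec_dotProduct_mulVec (P : Matrix ι κ ℝ) (x y : κ → ℝ) :
    P *ᵥ x ⬝ᵥ P *ᵥ y = x ⬝ᵥ (Pᵀ * P) *ᵥ y := by
  rw [← mulVec_mulVec, dotProduct_mulVec x, vecMul_transpose]

lemma isContraction_of_transpose_mul_self_eq_diagonal [DecidableEq κ] {P : Matrix ι κ ℝ}
    {e : κ → ℝ} (hP : Pᵀ * P = diagonal e) (he : ∀ k, e k ≤ 1) : IsContraction P := fun x => by
  rw [mulVec_dotProduct_mulVec, hP]
  simp only [dotProduct, mulVec_diagonal]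
  exact Finset.sum_le_sum fun k _ => by nlinarith [he k, mul_self_nonneg (x k)]

lemma isContraction_transpose_of_transpose_mul_self_eq_one [DecidableEq κ] {V : Matrix ι κ ℝ}
    (hV : Vᵀ * V = 1) : IsContraction Vᵀ := fun x => by
  -- Bessel: `‖x‖² - ‖Vᵀ x‖² = ‖x - V Vᵀ x‖²`.
  set y := Vᵀ *ᵥ x
  have hxy : x ⬝ᵥ V *ᵥ y = y ⬝ᵥ y := by rw [dotProduct_mulVec, ← mulVec_transpose]
  have hyy : V *ᵥ y ⬝ᵥ V *ᵥ y = y ⬝ᵥ y := by rw [mulVec_dotProduct_mulVec, hV, one_mulVec]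
  have hres : 0 ≤ (x - V *ᵥ y) ⬝ᵥ (x - V *ᵥ y) :=
    Finset.sum_nonneg fun _ _ => mul_self_nonneg _
  rw [sub_dotProduct, dotProduct_sub, dotProduct_sub, dotProduct_comm (V *ᵥ y) x, hxy, hyy] at hres
  linarith

lemma gram_apply_eq_mulVec_dotProduct [DecidableEq κ] (B : Matrix ι κ ℝ) (j : κ) :
    (Bᵀ * B) j j = B *ᵥ Pi.single j 1 ⬝ᵥ B *ᵥ Pi.single j 1 := by
  rw [mulVec_dotProduct_mulVec]
  simp

lemma IsContraction.gram_mul_apply_le [DecidableEq ν] {G : Matrix ι κ ℝ} (hG : IsContraction G)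
    (A : Matrix κ ν ℝ) (j : ν) : ((G * A)ᵀ * (G * A)) j j ≤ (Aᵀ * A) j j := by
  rw [gram_apply_eq_mulVec_dotProduct, gram_apply_eq_mulVec_dotProduct, ← mulVec_mulVec]
  exact hG _

lemma IsContraction.transpose_mul_mul_apply_le_one [DecidableEq ρ] {G : Matrix ι κ ℝ}
    (hG : IsContraction G) {U : Matrix ι ρ ℝ} {V : Matrix κ ρ ℝ} (hU : Uᵀ * U = 1)
    (hV : Vᵀ * V = 1) (j : ρ) : (Uᵀ * G * V) j j ≤ 1 := by
  have hsq : (Uᵀ * G * V) j j ^ 2 ≤ 1 :=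
    calc (Uᵀ * G * V) j j ^ 2 ≤ ((Uᵀ * G * V)ᵀ * (Uᵀ * G * V)) j j :=
          sq_apply_le_gram_apply _ _ _
      _ ≤ (Vᵀ * V) j j :=
        ((isContraction_transpose_of_transpose_mul_self_eq_one hU).mul hG).gram_mul_apply_le V j
      _ = 1 := by simp [hV]
  nlinarith

end Contraction

section TraceInner

variable {m n r : ℕ}

lemma minner_eq_trace (A B : Matrix (Fin m) (Fin n) ℝ) : minner A B = trace (Aᵀ * B) := by
  simp only [minner, trace, Matrix.diag, mul_apply, transpose_apply]
  exact Finset.sum_comm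

lemma minner_comm (A B : Matrix (Fin m) (Fin n) ℝ) : minner A B = minner B A := by
  simp only [minner, mul_comm]

lemma minner_sub_right (A B C : Matrix (Fin m) (Fin n) ℝ) :
    minner A (B - C) = minner A B - minner A C := by
  simp only [minner_eq_trace, Matrix.mul_sub, trace_sub]

lemma minner_smul_left (c : ℝ) (A B : Matrix (Fin m) (Fin n) ℝ) :
    minner (c • A) B = c * minner A B := by
  simp only [minner_eq_trace, transpose_smul, Matrix.smul_mul, trace_smul, smul_eq_mul]

lemma frobSq_add (A B : Matrix (Fin m) (Fin n) ℝ) :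
    frobSq (A + B) = frobSq A + 2 * minner A B + frobSq B := by
  simp only [frobSq, minner, Matrix.add_apply, Finset.mul_sum, ← Finset.sum_add_distrib]
  exact Finset.sum_congr rfl fun i _ => Finset.sum_congr rfl fun j _ => by ring

lemma frobSq_pos {A : Matrix (Fin m) (Fin n) ℝ} (hA : A ≠ 0) : 0 < frobSq A := by
  obtain ⟨i, j, hij⟩ : ∃ i j, A i j ≠ 0 := by
    by_contra! h
    exact hA (Matrix.ext h)
  exact Finset.sum_pos' (fun _ _ => Finset.sum_nonneg fun _ _ => sq_nonneg _)
    ⟨i, Finset.mem_univ _, Finset.sum_pos' (fun _ _ => sq_nonneg _)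
      ⟨j, Finset.mem_univ _, by positivity⟩⟩

lemma minner_mul_of_mul_transpose_eq_one {Q : Matrix (Fin n) (Fin n) ℝ} (hQ : Q * Qᵀ = 1)
    (A B : Matrix (Fin m) (Fin n) ℝ) : minner (A * Q) (B * Q) = minner A B := by
  rw [minner_eq_trace, minner_eq_trace, transpose_mul, Matrix.mul_assoc, trace_mul_comm,
    Matrix.mul_assoc, Matrix.mul_assoc, hQ, Matrix.mul_one]

lemma minner_le_sum_sqrt_mul_sqrt (A B : Matrix (Fin m) (Fin n) ℝ) :
    minner A B ≤ ∑ j, √((Aᵀ * A) j j) * √((Bᵀ * B) j j) := by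
  rw [minner, Finset.sum_comm]
  gcongr with j
  simpa [mul_apply, sq] using
    Real.sum_mul_le_sqrt_mul_sqrt Finset.univ (fun i => A i j) (fun i => B i j)

lemma minner_svd_left (U : Matrix (Fin m) (Fin r) ℝ) (s : Fin r → ℝ)
    (V : Matrix (Fin n) (Fin r) ℝ) (G : Matrix (Fin m) (Fin n) ℝ) :
    minner (U * diagonal s * Vᵀ) G = ∑ j, s j * (Uᵀ * G * V) j j := by
  rw [minner_eq_trace, transpose_mul, transpose_mul, transpose_transpose, diagonal_transpose,
    Matrix.mul_assoc, trace_mul_comm]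
  simp [trace, diagonal_mul, Matrix.mul_assoc]

end TraceInner

section RightSingularVectors

variable {m n : ℕ} (Y : Matrix (Fin m) (Fin n) ℝ)

lemma isHermitian_transpose_mul_self : (Yᵀ * Y).IsHermitian := by
  simpa [conjTranspose_eq_transpose_of_trivial] using isHermitian_conjTranspose_mul_self Y

noncomputable def rightSingVecs : Matrix (Fin n) (Fin n) ℝ :=
  (isHermitian_transpose_mul_self Y).eigenvectorUnitary

lemma rightSingVecs_transpose_mul_self : (rightSingVecs Y)ᵀ * rightSingVecs Y = 1 := by
  simpa [rightSingVecs, star_eq_conjTranspose, conjTranspose_eq_transpose_of_trivial] using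
    Unitary.coe_star_mul_self (isHermitian_transpose_mul_self Y).eigenvectorUnitary

lemma rightSingVecs_mul_transpose_self : rightSingVecs Y * (rightSingVecs Y)ᵀ = 1 :=
  mul_eq_one_comm.mp (rightSingVecs_transpose_mul_self Y)

lemma singVals_nonneg (i : Fin n) : 0 ≤ singVals Y i :=
  Real.sqrt_nonneg _

lemma sq_singVals (i : Fin n) :
    singVals Y i ^ 2 = (isHermitian_transpose_mul_self Y).eigenvalues i := by
  have hpsd : (Yᵀ * Y).PosSemidef := by
    simpa [conjTranspose_eq_transpose_of_trivial] using posSemidef_conjTranspose_mul_self Y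
  exact Real.sq_sqrt (hpsd.eigenvalues_nonneg i)

lemma gram_mul_rightSingVecs :
    (Y * rightSingVecs Y)ᵀ * (Y * rightSingVecs Y) = diagonal (fun i => singVals Y i ^ 2) := by
  have h := (isHermitian_transpose_mul_self Y).conjStarAlgAut_star_eigenvectorUnitary
  simp only [sq_singVals]
  simpa [star_eq_conjTranspose, conjTranspose_eq_transpose_of_trivial, rightSingVecs,
    transpose_mul, Matrix.mul_assoc] using h

end RightSingularVectors

section NuclearNorm

variable {m n r : ℕ}

lemma minner_le_nnorm {G : Matrix (Fin m) (Fin n) ℝ} (hG : IsContraction G)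
    (Y : Matrix (Fin m) (Fin n) ℝ) : minner G Y ≤ nnorm Y := by
  set Q := rightSingVecs Y
  have hgram : (Y * Q)ᵀ * (Y * Q) = diagonal (fun i => singVals Y i ^ 2) :=
    gram_mul_rightSingVecs Y
  have hQ : Qᵀ * Q = 1 := rightSingVecs_transpose_mul_self Y
  calc minner G Y = minner (G * Q) (Y * Q) :=
        (minner_mul_of_mul_transpose_eq_one (rightSingVecs_mul_transpose_self Y) G Y).symm
    _ ≤ ∑ j, √(((G * Q)ᵀ * (G * Q)) j j) * √(((Y * Q)ᵀ * (Y * Q)) j j) :=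
        minner_le_sum_sqrt_mul_sqrt _ _
    _ ≤ ∑ j, singVals Y j := by
        gcongr with j
        have hGQ : ((G * Q)ᵀ * (G * Q)) j j ≤ 1 :=
          (hG.gram_mul_apply_le Q j).trans (by simp [hQ])
        rw [hgram, diagonal_apply_eq, Real.sqrt_sq (singVals_nonneg Y j)]
        exact mul_le_of_le_one_left (singVals_nonneg Y j) (Real.sqrt_le_one.mpr hGQ)

lemma exists_isContraction_minner_eq_nnorm (Y : Matrix (Fin m) (Fin n) ℝ) :
    ∃ G, IsContraction G ∧ minner G Y = nnorm Y := by
  set Q := rightSingVecs Y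
  set σ := singVals Y
  have hgram : (Y * Q)ᵀ * (Y * Q) = diagonal (fun i => σ i ^ 2) := gram_mul_rightSingVecs Y
  have hσ : ∀ i, (σ i)⁻¹ * σ i ^ 2 = σ i := fun i => by
    rcases eq_or_ne (σ i) 0 with h | h
    · simp [h]
    · field_simp
  -- `0⁻¹ = 0`: the columns of `P` are the unit vectors `Y qᵢ / σᵢ`, or `0` where `σᵢ = 0`.
  set D := diagonal (fun i => (σ i)⁻¹)
  set P := Y * Q * D
  have hPY : Pᵀ * (Y * Q) = D * diagonal (fun i => σ i ^ 2) := by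
    rw [← hgram]
    simp only [P, D, transpose_mul, diagonal_transpose, Matrix.mul_assoc]
  have hP : Pᵀ * P = diagonal (fun i => (σ i)⁻¹ * σ i ^ 2 * (σ i)⁻¹) := by
    rw [show Pᵀ * P = Pᵀ * (Y * Q) * D from (Matrix.mul_assoc _ _ _).symm, hPY]
    simp only [D, diagonal_mul_diagonal]
  refine ⟨P * Qᵀ, (isContraction_of_transpose_mul_self_eq_diagonal hP fun i => ?_).mul
    (isContraction_transpose_of_transpose_mul_self_eq_one (rightSingVecs_transpose_mul_self Y)), ?_⟩
  · rw [hσ]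
    rcases eq_or_ne (σ i) 0 with h | h
    · simp [h]
    · rw [mul_inv_cancel₀ h]
  · rw [← minner_mul_of_mul_transpose_eq_one (rightSingVecs_mul_transpose_self Y),
      Matrix.mul_assoc P, rightSingVecs_transpose_mul_self, Matrix.mul_one, minner_eq_trace, hPY]
    simp only [D, diagonal_mul_diagonal, trace_diagonal, hσ]
    rfl

lemma nnorm_svd_le {U : Matrix (Fin m) (Fin r) ℝ} {V : Matrix (Fin n) (Fin r) ℝ}
    (hU : Uᵀ * U = 1) (hV : Vᵀ * V = 1) {s : Fin r → ℝ} (hs : ∀ j, 0 ≤ s j) :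
    nnorm (U * diagonal s * Vᵀ) ≤ ∑ j, s j := by
  obtain ⟨G, hG, hGY⟩ := exists_isContraction_minner_eq_nnorm (U * diagonal s * Vᵀ)
  rw [← hGY, minner_comm, minner_svd_left]
  exact Finset.sum_le_sum fun j _ =>
    mul_le_of_le_one_right (hs j) (hG.transpose_mul_mul_apply_le_one hU hV j)

lemma nucSubgrad_of_isContraction {Z G : Matrix (Fin m) (Fin n) ℝ} (hG : IsContraction G)
    (hZ : nnorm Z ≤ minner G Z) : NucSubgrad Z G := fun Y => by
  rw [minner_sub_right]
  linarith [minner_le_nnorm hG Y]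

end NuclearNorm

section SoftThreshold

variable {m n r : ℕ}

lemma isContraction_svd {U : Matrix (Fin m) (Fin r) ℝ} {V : Matrix (Fin n) (Fin r) ℝ}
    (hU : Uᵀ * U = 1) (hV : Vᵀ * V = 1) {c : Fin r → ℝ} (hc : ∀ j, |c j| ≤ 1) :
    IsContraction (U * diagonal c * Vᵀ) := by
  refine (isContraction_of_transpose_mul_self_eq_diagonal (e := fun j => c j * c j) ?_
    fun j => ?_).mul (isContraction_transpose_of_transpose_mul_self_eq_one hV)
  · rw [transpose_mul, diagonal_transpose, Matrix.mul_assoc, ← Matrix.mul_assoc Uᵀ, hU,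
      Matrix.one_mul, diagonal_mul_diagonal]
  · rw [← abs_mul_abs_self]
    exact mul_le_one₀ (hc j) (abs_nonneg _) (hc j)

lemma minner_svd_svd {U : Matrix (Fin m) (Fin r) ℝ} {V : Matrix (Fin n) (Fin r) ℝ}
    (hU : Uᵀ * U = 1) (hV : Vᵀ * V = 1) (s c : Fin r → ℝ) :
    minner (U * diagonal s * Vᵀ) (U * diagonal c * Vᵀ) = ∑ j, s j * c j := by
  rw [minner_svd_left]
  simp [Matrix.mul_assoc, ← Matrix.mul_assoc Uᵀ U, hU, hV]

lemma soft_threshold_optimality {d lam : ℝ} (hd : 0 < d) (hlam : 0 ≤ lam) :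
    ∃ c, |c| ≤ 1 ∧ d - max (d - lam) 0 = lam * c ∧ max (d - lam) 0 * c = max (d - lam) 0 := by
  rcases le_or_gt d lam with h | h
  · have hlam' : lam ≠ 0 := (hd.trans_le h).ne'
    refine ⟨d / lam, ?_, ?_, ?_⟩
    · rw [abs_div, abs_of_pos hd, abs_of_nonneg hlam]
      exact div_le_one_of_le₀ h hlam
    · rw [max_eq_right (by linarith)]
      field_simp
      ring
    · rw [max_eq_right (by linarith), zero_mul]
  · refine ⟨1, by norm_num, ?_, mul_one _⟩
    rw [max_eq_left (by linarith)]
    ring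

lemma objective_lt_of_nucSubgrad {lam : ℝ} (hlam : 0 ≤ lam) {W Zh G Z : Matrix (Fin m) (Fin n) ℝ}
    (hG : NucSubgrad Zh G) (hW : W - Zh = lam • G) (hZ : Z ≠ Zh) :
    (1 / 2) * frobSq (Zh - W) + lam * nnorm Zh < (1 / 2) * frobSq (Z - W) + lam * nnorm Z := by
  have hexpand :
      frobSq (Z - W) = frobSq (Zh - W) + 2 * minner (Zh - W) (Z - Zh) + frobSq (Z - Zh) := by
    rw [← frobSq_add]
    congr 1
    abel
  have hcross : minner (Zh - W) (Z - Zh) = -(lam * minner G (Z - Zh)) := by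
    rw [← neg_sub, ← neg_one_smul ℝ (W - Zh), hW, smul_smul, minner_smul_left]
    ring
  have hsub := mul_le_mul_of_nonneg_left (hG Z) hlam
  have hpos := frobSq_pos (sub_ne_zero.mpr hZ)
  rw [mul_add] at hsub
  linarith

end SoftThreshold

/-- soft-thresholded SVD is the unique minimizer of
`½‖Z - W‖_F² + λ‖Z‖_*`. -/
theorem soft_threshold_unique_minimizer {m n r : ℕ}
    (W : Matrix (Fin m) (Fin n) ℝ) (U : Matrix (Fin m) (Fin r) ℝ)
    (d : Fin r → ℝ) (V : Matrix (Fin n) (Fin r) ℝ)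
    (lam : ℝ) (hlam : 0 ≤ lam) (hSVD : IsSVD W U d V) :
    ∀ Z : Matrix (Fin m) (Fin n) ℝ,
      Z ≠ U * Matrix.diagonal (fun i => max (d i - lam) 0) * Vᵀ →
      (1 / 2) * frobSq (U * Matrix.diagonal (fun i => max (d i - lam) 0) * Vᵀ - W) +
          lam * nnorm (U * Matrix.diagonal (fun i => max (d i - lam) 0) * Vᵀ) <
        (1 / 2) * frobSq (Z - W) + lam * nnorm Z := by
  obtain ⟨hU, hV, hd, rfl⟩ := hSVD
  intro Z hZ
  choose c hc hres hfix using fun i => soft_threshold_optimality (hd i) hlam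
  set s := fun i => max (d i - lam) 0
  refine objective_lt_of_nucSubgrad hlam
    (nucSubgrad_of_isContraction (isContraction_svd hU hV hc) ?_) ?_ hZ
  · calc nnorm (U * diagonal s * Vᵀ) ≤ ∑ j, s j := nnorm_svd_le hU hV fun j => le_max_right _ _
      _ = minner (U * diagonal c * Vᵀ) (U * diagonal s * Vᵀ) := by
        rw [minner_comm, minner_svd_svd hU hV]
        exact Finset.sum_congr rfl fun j _ => (hfix j).symm
  · have hds : diagonal d - diagonal s = lam • diagonal c := by
      rw [diagonal_sub, ← diagonal_smul]
      exact congrArg diagonal (funext hres)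
    rw [← Matrix.sub_mul, ← Matrix.mul_sub, hds, Matrix.mul_smul, Matrix.smul_mul]
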